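/- Let ℳ be a finite set of d×d complex matrices such that no two distinct elements of ℳ have a common left-eigenvector, i.e., for all M ≠ M' in ℳ there is no nonzero row vector r ∈ ℂ^d with rM = λr and rM' = λ'r for some λ, λ' ∈ ℂ. Let (A_n)_{n≥1} be a sequence with each A_n ∈ ℳ which is not eventually constant, and suppose P_n ≠ 0 for every n. Then the sequence n ↦ P_n/‖P_n‖ does not converge. -/

import Mathlib

open Filter Matrix Topology

/-- `‖X‖`: sum of the moduli of the entries of a complex matrix. -/
noncomputable def matEntrySumNorm {d : ℕ} (M : Matrix (Fin d) (Fin d) ℂ) : ℝ :=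
  ∑ i, ∑ j, ‖M i j‖

/-- `P_n = A_1 ⋯ A_n` (ordered product). -/
noncomputable def matProd {d : ℕ} (A : ℕ → Matrix (Fin d) (Fin d) ℂ) (n : ℕ) :
    Matrix (Fin d) (Fin d) ℂ :=
  ((List.range n).map fun i => A (i + 1)).prod

/-!
Suppose `P_n / ‖P_n‖ → Q`; then `‖Q‖ = 1`. Whenever `A_{n+1} = M`,
`‖(P_n / ‖P_n‖) M‖ • P_{n+1} / ‖P_{n+1}‖ = (P_n / ‖P_n‖) M`, so if `M` occurs infinitely
often, passing to the limit gives `Q M = ‖Q M‖ • Q`: every row of `Q` is a left eigenvector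
of `M`. As `ℳ` is finite and the sequence is not eventually constant, two distinct matrices
occur infinitely often, and a nonzero row of `Q` is a common left eigenvector of both.
-/

lemma matProd_succ {d : ℕ} (A : ℕ → Matrix (Fin d) (Fin d) ℂ) (n : ℕ) :
    matProd A (n + 1) = matProd A n * A (n + 1) := by
  simp [matProd, List.range_succ]

section EntrySumNorm

variable {d : ℕ}

lemma continuous_matEntrySumNorm : Continuous (matEntrySumNorm (d := d)) := by
  unfold matEntrySumNorm
  fun_prop

lemma matEntrySumNorm_nonneg (X : Matrix (Fin d) (Fin d) ℂ) : 0 ≤ matEntrySumNorm X := by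
  unfold matEntrySumNorm
  positivity

lemma matEntrySumNorm_smul (c : ℝ) (X : Matrix (Fin d) (Fin d) ℂ) :
    matEntrySumNorm (c • X) = |c| * matEntrySumNorm X := by
  simp [matEntrySumNorm, Finset.mul_sum]

lemma matEntrySumNorm_eq_zero_iff {X : Matrix (Fin d) (Fin d) ℂ} :
    matEntrySumNorm X = 0 ↔ X = 0 := by
  simp (disch := intros; positivity) [matEntrySumNorm, Finset.sum_eq_zero_iff_of_nonneg,
    ← Matrix.ext_iff]

noncomputable def matNormalize (X : Matrix (Fin d) (Fin d) ℂ) : Matrix (Fin d) (Fin d) ℂ :=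
  (matEntrySumNorm X)⁻¹ • X

lemma matEntrySumNorm_matNormalize {X : Matrix (Fin d) (Fin d) ℂ} (hX : X ≠ 0) :
    matEntrySumNorm (matNormalize X) = 1 := by
  rw [matNormalize, matEntrySumNorm_smul, abs_inv, abs_of_nonneg (matEntrySumNorm_nonneg X)]
  exact inv_mul_cancel₀ (mt matEntrySumNorm_eq_zero_iff.1 hX)

lemma matEntrySumNorm_smul_matNormalize_mul {X M : Matrix (Fin d) (Fin d) ℂ} (hXM : X * M ≠ 0) :
    matEntrySumNorm (matNormalize X * M) • matNormalize (X * M) = matNormalize X * M := by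
  have hN : matEntrySumNorm (X * M) ≠ 0 := mt matEntrySumNorm_eq_zero_iff.1 hXM
  rw [matNormalize, matNormalize, smul_mul_assoc, matEntrySumNorm_smul, smul_smul, abs_inv,
    abs_of_nonneg (matEntrySumNorm_nonneg X), mul_assoc, mul_inv_cancel₀ hN, mul_one]

end EntrySumNorm

lemma exists_ne_frequently_eq_of_not_eventually_const {α : Type*} {s : Set α} (hs : s.Finite)
    {A : ℕ → α} (hA : ∀ n, A n ∈ s) (hnc : ¬ ∃ N : ℕ, ∀ n ≥ N, A n = A N) :
    ∃ a ∈ s, ∃ b ∈ s, a ≠ b ∧ (∃ᶠ n in atTop, A n = a) ∧ ∃ᶠ n in atTop, A n = b := by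
  have pigeonhole (p : ℕ → Prop) (hp : ∃ᶠ n in atTop, p n) :
      ∃ a ∈ s, ∃ᶠ n in atTop, p n ∧ A n = a :=
    hs.frequently_exists.1 (hp.mono fun n hn => ⟨A n, hA n, hn, rfl⟩)
  obtain ⟨a, ha, hfa⟩ := pigeonhole (fun _ => True) (frequently_const.2 trivial)
  have hne : ∃ᶠ n in atTop, A n ≠ a := by
    refine not_eventually.1 fun h => hnc ?_
    obtain ⟨N, hN⟩ := eventually_atTop.1 h
    exact ⟨N, fun n hn => (hN n hn).trans (hN N le_rfl).symm⟩
  obtain ⟨b, hb, hfb⟩ := pigeonhole _ hne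
  obtain ⟨n, hn, rfl⟩ := hfb.exists
  exact ⟨a, ha, A n, hb, Ne.symm hn, hfa.mono fun _ h => h.2, hfb.mono fun _ h => h.2⟩

lemma mul_eq_smul_of_tendsto_matNormalize {d : ℕ} {A : ℕ → Matrix (Fin d) (Fin d) ℂ}
    {Q M : Matrix (Fin d) (Fin d) ℂ} (hP : ∀ n, matProd A n ≠ 0)
    (hQ : Tendsto (fun n => matNormalize (matProd A n)) atTop (𝓝 Q))
    (hM : ∃ᶠ n in atTop, A (n + 1) = M) :
    Q * M = matEntrySumNorm (Q * M) • Q := by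
  have hmul : Tendsto (fun n => matNormalize (matProd A n) * M) atTop (𝓝 (Q * M)) :=
    hQ.mul_const M
  have hshift : Tendsto (fun n => matEntrySumNorm (matNormalize (matProd A n) * M) •
      matNormalize (matProd A (n + 1))) atTop (𝓝 (matEntrySumNorm (Q * M) • Q)) :=
    ((continuous_matEntrySumNorm.tendsto _).comp hmul).smul (hQ.comp (tendsto_add_atTop_nat 1))
  refine tendsto_nhds_unique_of_frequently_eq hmul hshift (hM.mono fun n hn => ?_)
  have hPn := hP (n + 1)
  rw [matProd_succ, hn] at hPn ⊢
  exact (matEntrySumNorm_smul_matNormalize_mul hPn).symm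

/-- Corollary 3.4: if the `A_n` range in a finite set `ℳ` no two distinct
elements of which share a left-eigenvector, if the sequence is not eventually constant,
and if `P_n ≠ 0` for all `n`, then `P_n/‖P_n‖` diverges. -/
theorem normalized_product_diverges_of_finite_set {d : ℕ}
    (ℳ : Set (Matrix (Fin d) (Fin d) ℂ)) (hfin : ℳ.Finite)
    (hnoeig : ∀ M ∈ ℳ, ∀ M' ∈ ℳ, M ≠ M' →
      ¬ ∃ r : Fin d → ℂ, r ≠ 0 ∧ ∃ lam lam' : ℂ,
        r ᵥ* M = lam • r ∧ r ᵥ* M' = lam' • r)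
    (A : ℕ → Matrix (Fin d) (Fin d) ℂ)
    (hmem : ∀ n, A n ∈ ℳ)
    (hnc : ¬ ∃ N : ℕ, ∀ n ≥ N, A n = A N)
    (hP : ∀ n, matProd A n ≠ 0) :
    ¬ ∃ Q : Matrix (Fin d) (Fin d) ℂ,
      Tendsto (fun n => (matEntrySumNorm (matProd A n))⁻¹ • matProd A n)
        atTop (nhds Q) := by
  rintro ⟨Q, hQ⟩
  change Tendsto (fun n => matNormalize (matProd A n)) atTop (𝓝 Q) at hQ
  have hQ_norm : matEntrySumNorm Q = 1 :=
    tendsto_nhds_unique ((continuous_matEntrySumNorm.tendsto Q).comp hQ)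
      (tendsto_const_nhds.congr fun n => (matEntrySumNorm_matNormalize (hP n)).symm)
  obtain ⟨i, hi⟩ : ∃ i, Q i ≠ 0 := Function.ne_iff.1 fun h =>
    one_ne_zero (hQ_norm.symm.trans (matEntrySumNorm_eq_zero_iff.2 h))
  have hnc_succ : ¬ ∃ N : ℕ, ∀ n ≥ N, A (n + 1) = A (N + 1) := by
    rintro ⟨N, hN⟩
    refine hnc ⟨N + 1, fun n hn => ?_⟩
    obtain ⟨m, rfl⟩ : ∃ m, n = m + 1 := ⟨n - 1, by omega⟩
    exact hN m (by omega)
  obtain ⟨M, hM, M', hM', hne, hfreq, hfreq'⟩ :=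
    exists_ne_frequently_eq_of_not_eventually_const hfin (fun n => hmem (n + 1)) hnc_succ
  have row_eigen (N : Matrix (Fin d) (Fin d) ℂ) (hN : ∃ᶠ n in atTop, A (n + 1) = N) :
      Q i ᵥ* N = (matEntrySumNorm (Q * N) : ℂ) • Q i := by
    rw [← mul_apply_eq_vecMul, Complex.coe_smul]
    exact congrFun (mul_eq_smul_of_tendsto_matNormalize hP hQ hN) i
  exact hnoeig M hM M' hM' hne ⟨Q i, hi, _, _, row_eigen M hfreq, row_eigen M' hfreq'⟩
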